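/- arXiv:2512.23302 — 2 statements merged into one kernel-verified Lean document; each statement's English description precedes it below -/
import Mathlib

section
/- If A ⊆ (0, ∞) is a Borel set such that ∫₀^∞ 𝟙_A(e^y) dy < ∞, then A has natural density zero, i.e., (1/x)·meas(A ∩ [1, x]) → 0 as x → ∞. -/
open MeasureTheory Filter Set

lemma my_lintegral_image_eq {s : Set ℝ} {f f' : ℝ → ℝ} (hs : MeasurableSet s)
    (hf' : ∀ x ∈ s, HasDerivWithinAt f (f' x) s x) (hf : Set.InjOn f s) (g : ℝ → ENNReal) :
    ∫⁻ x in f '' s, g x = ∫⁻ x in s, ENNReal.ofReal |f' x| * g (f x) := by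
  simpa only [ContinuousLinearMap.det_toSpanSingleton] using
    MeasureTheory.lintegral_image_eq_lintegral_abs_det_fderiv_mul volume hs
      (fun x hx => (hf' x hx).hasFDerivWithinAt) hf g

theorem natural_density_zero_of_finite_log_measure
    (A : Set ℝ) (hA : MeasurableSet A) (hA' : A ⊆ Set.Ioi (0 : ℝ))
    (hfin : ∫⁻ y in Set.Ioi (0 : ℝ), A.indicator (fun _ => (1 : ENNReal)) (Real.exp y) < ⊤) :
    Tendsto (fun x : ℝ => (volume (A ∩ Set.Icc 1 x)).toReal / x) atTop (nhds 0) := by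
  set g : ℝ → ENNReal := fun u => A.indicator (fun _ => (1 : ENNReal)) u / ENNReal.ofReal u with hg
  have g_meas : Measurable g :=
    (measurable_const.indicator hA).div ENNReal.measurable_ofReal
  -- image of exp
  have himg : Real.exp '' Set.Ioi 0 = Set.Ioi 1 := by
    ext u
    simp only [Set.mem_image, Set.mem_Ioi]
    constructor
    · rintro ⟨y, hy, rfl⟩
      calc (1:ℝ) = Real.exp 0 := Real.exp_zero.symm
      _ < Real.exp y := Real.exp_lt_exp.2 hy
    · intro hu
      exact ⟨Real.log u, Real.log_pos hu, Real.exp_log (by linarith)⟩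
  -- change of variables
  have key : ∫⁻ u in Set.Ioi (1:ℝ), g u
      = ∫⁻ y in Set.Ioi (0:ℝ), A.indicator (fun _ => (1 : ENNReal)) (Real.exp y) := by
    rw [← himg, my_lintegral_image_eq measurableSet_Ioi
      (fun x _ => (Real.hasDerivAt_exp x).hasDerivWithinAt) (Real.exp_injective.injOn) g]
    refine setLIntegral_congr_fun measurableSet_Ioi (fun y hy => ?_)
    have h1 : ENNReal.ofReal (Real.exp y) ≠ 0 := by
      simp [Real.exp_pos y]
    have h2 : ENNReal.ofReal (Real.exp y) ≠ ⊤ := ENNReal.ofReal_ne_top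
    rw [abs_of_pos (Real.exp_pos y), hg]
    simp only []
    rw [mul_comm, ENNReal.div_mul_cancel h1 h2]
  have hI : ∫⁻ u in Set.Ioi (1:ℝ), g u < ⊤ := by rw [key]; exact hfin
  -- the finite measure ν
  set ν : Measure ℝ := (volume.restrict (Set.Ioi 1)).withDensity g with hν
  have hν_apply : ∀ T : ℝ, 1 ≤ T → ν (Set.Ioi T) = ∫⁻ u in Set.Ioi T, g u := by
    intro T hT
    rw [hν, withDensity_apply _ measurableSet_Ioi, Measure.restrict_restrict measurableSet_Ioi,
      Set.inter_eq_self_of_subset_left (Set.Ioi_subset_Ioi hT)]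
  have hν_fin : ν (Set.Ioi (1:ℝ)) ≠ ⊤ := by rw [hν_apply 1 le_rfl]; exact hI.ne
  -- tail tends to zero
  have htail : Tendsto (fun T : ℝ => ν (Set.Ioi T)) atTop (nhds 0) := by
    have h0 : (⋂ T : ℝ, Set.Ioi T) = (∅ : Set ℝ) := by
      ext x
      simp only [Set.mem_iInter, Set.mem_Ioi, Set.mem_empty_iff_false, iff_false, not_forall,
        not_lt]
      exact ⟨x, le_rfl⟩
    have := tendsto_measure_iInter_atTop (μ := ν) (s := fun T : ℝ => Set.Ioi T)
      (fun T => measurableSet_Ioi.nullMeasurableSet) (fun a b hab => Set.Ioi_subset_Ioi hab)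
      ⟨1, hν_fin⟩
    rwa [h0, measure_empty] at this
  -- key bound
  have hbound : ∀ T : ℝ, 1 ≤ T → ∀ x : ℝ, T ≤ x →
      volume (A ∩ Set.Icc 1 x) ≤ ENNReal.ofReal T + ENNReal.ofReal x * ν (Set.Ioi T) := by
    intro T hT x hx
    have hsub : A ∩ Set.Icc 1 x ⊆ Set.Icc 1 T ∪ (A ∩ Set.Ioc T x) := by
      rintro u ⟨huA, hu1, hux⟩
      rcases le_or_gt u T with h | h
      · exact Or.inl ⟨hu1, h⟩
      · exact Or.inr ⟨huA, h, hux⟩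
    calc volume (A ∩ Set.Icc 1 x) ≤ volume (Set.Icc 1 T ∪ (A ∩ Set.Ioc T x)) :=
          measure_mono hsub
      _ ≤ volume (Set.Icc 1 T) + volume (A ∩ Set.Ioc T x) := measure_union_le _ _
      _ ≤ ENNReal.ofReal T + ENNReal.ofReal x * ν (Set.Ioi T) := by
          gcongr
          · rw [Real.volume_Icc]
            exact ENNReal.ofReal_le_ofReal (by linarith)
          · -- volume (A ∩ Ioc T x) ≤ ofReal x * ν (Ioi T)
            have e1 : volume (A ∩ Set.Ioc T x)
                = ∫⁻ u in Set.Ioc T x, A.indicator (fun _ => (1:ENNReal)) u := by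
              rw [lintegral_indicator hA, Measure.restrict_restrict hA, setLIntegral_one]
            rw [e1, hν_apply T hT]
            calc ∫⁻ u in Set.Ioc T x, A.indicator (fun _ => (1:ENNReal)) u
                ≤ ∫⁻ u in Set.Ioc T x, ENNReal.ofReal x * g u := by
                  refine setLIntegral_mono (by fun_prop) fun u hu => ?_
                  by_cases huA : u ∈ A
                  · rw [Set.indicator_of_mem huA, hg]
                    simp only [Set.indicator_of_mem huA]
                    rw [mul_one_div]
                    have hu0 : (0:ℝ) < u := lt_of_le_of_lt (by linarith) hu.1
                    have : ENNReal.ofReal u ≤ ENNReal.ofReal x :=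
                      ENNReal.ofReal_le_ofReal hu.2
                    rw [ENNReal.le_div_iff_mul_le (Or.inl (by simp [hu0])) (Or.inl ENNReal.ofReal_ne_top), one_mul]
                    exact this
                  · simp [Set.indicator_of_notMem huA]
              _ = ENNReal.ofReal x * ∫⁻ u in Set.Ioc T x, g u :=
                  lintegral_const_mul _ g_meas
              _ ≤ ENNReal.ofReal x * ∫⁻ u in Set.Ioi T, g u := by
                  gcongr
                  exact Set.Ioc_subset_Ioi_self
  -- conclusion
  rw [Metric.tendsto_atTop]
  intro ε hε
  obtain ⟨T₀, hT₀⟩ := (ENNReal.tendsto_atTop_zero.mp htail) (ENNReal.ofReal (ε/2))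
    (by simp [hε])
  set T : ℝ := max T₀ 1 with hTdef
  have hT1 : (1:ℝ) ≤ T := le_max_right _ _
  have hTtail : ν (Set.Ioi T) ≤ ENNReal.ofReal (ε/2) := hT₀ T (le_max_left _ _)
  have hc_fin : ν (Set.Ioi T) ≠ ⊤ :=
    lt_of_le_of_lt hTtail ENNReal.ofReal_lt_top |>.ne
  set c : ℝ := (ν (Set.Ioi T)).toReal with hcdef
  have hc : c ≤ ε/2 := by
    rw [hcdef]
    calc (ν (Set.Ioi T)).toReal ≤ (ENNReal.ofReal (ε/2)).toReal :=
        ENNReal.toReal_mono ENNReal.ofReal_ne_top hTtail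
      _ = ε/2 := ENNReal.toReal_ofReal (by linarith)
  refine ⟨max T (4*T/ε), fun x hx => ?_⟩
  have hxT : T ≤ x := le_trans (le_max_left _ _) hx
  have hx4 : 4*T/ε ≤ x := le_trans (le_max_right _ _) hx
  have hx0 : (0:ℝ) < x := lt_of_lt_of_le (by linarith) hxT
  have hb := hbound T hT1 x hxT
  have hf_le : (volume (A ∩ Set.Icc 1 x)).toReal ≤ T + x * c := by
    have : (volume (A ∩ Set.Icc 1 x)).toReal
        ≤ (ENNReal.ofReal T + ENNReal.ofReal x * ν (Set.Ioi T)).toReal := by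
      apply ENNReal.toReal_mono _ hb
      exact ENNReal.add_ne_top.mpr ⟨ENNReal.ofReal_ne_top,
        ENNReal.mul_ne_top ENNReal.ofReal_ne_top hc_fin⟩
    rw [ENNReal.toReal_add ENNReal.ofReal_ne_top
      (ENNReal.mul_ne_top ENNReal.ofReal_ne_top hc_fin), ENNReal.toReal_mul,
      ENNReal.toReal_ofReal (by linarith), ENNReal.toReal_ofReal hx0.le] at this
    exact this
  rw [Real.dist_eq, sub_zero, abs_of_nonneg (by positivity)]
  have h1 : (volume (A ∩ Set.Icc 1 x)).toReal / x ≤ T/x + c := by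
    rw [div_add' _ _ _ hx0.ne', div_le_div_iff_of_pos_right hx0]
    linarith [hf_le]
  have h2 : T/x < ε/2 := by
    rw [div_lt_iff₀ hx0]
    have hT0 : (0:ℝ) < T := by linarith
    have : 4*T/ε ≤ x := hx4
    rw [div_le_iff₀ hε] at this
    nlinarith
  linarith
end

section
/- Let Δ : [log 2, ∞) → ℂ be locally integrable and suppose for each T ≥ 2 there is a decomposition Δ(y) = S_T(y) + R_T(y) with |R_T(y)| ≤ C((log T)²·e^{y/2}/T + 1/y), where S_T(y) = ∑_{n : |γₙ| ≤ T} aₙ e^{iyγₙ}/ρₙ with ∑ₙ |aₙ|/(|ρₙ|·|γₙ|) < ∞ and all γₙ ≠ 0. Then the primitive G(Y) = ∫_{log 2}^Y Δ(u) du satisfies |G(Y)| ≤ C'·log Y for all Y ≥ 2, with C' depending only on C and the sum ∑ₙ |aₙ|/(|ρₙ||γₙ|). -/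
open MeasureTheory

theorem primitive_log_bound
    (Δ : ℝ → ℂ) (hΔ : LocallyIntegrable Δ volume)
    (a : ℕ → ℂ) (γ : ℕ → ℝ) (ρ : ℕ → ℂ)
    (hρ : ∀ n, ρ n = 1 / 2 + Complex.I * (γ n : ℂ))
    (hγ : ∀ n, γ n ≠ 0)
    (hsum : Summable fun n => ‖a n‖ / (‖ρ n‖ * |γ n|))
    (C : ℝ) (hC : 0 < C)
    (hdecomp : ∀ T : ℝ, 2 ≤ T → ∀ y : ℝ, Real.log 2 ≤ y →
      ‖Δ y - ∑' n : ℕ,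
          if |γ n| ≤ T then a n * Complex.exp (Complex.I * y * (γ n : ℂ)) / ρ n else 0‖
        ≤ C * ((Real.log T) ^ 2 * Real.exp (y / 2) / T + 1 / y)) :
    ∃ C' : ℝ, ∀ Y : ℝ, 2 ≤ Y →
      ‖∫ u in (Real.log 2)..Y, Δ u‖ ≤ C' * Real.log Y := by
  classical
  set K := ∑' n, ‖a n‖ / (‖ρ n‖ * |γ n|) with hKdef
  have hKnonneg : 0 ≤ K := tsum_nonneg fun n => by positivity
  have hlog2pos : (0:ℝ) < Real.log 2 := Real.log_pos (by norm_num)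
  have hlog2le1 : Real.log 2 ≤ 1 := by
    have := Real.log_le_sub_one_of_pos (by norm_num : (0:ℝ) < 2); linarith
  have hρabs : ∀ n, (1:ℝ)/2 ≤ ‖ρ n‖ := by
    intro n
    have h1 : (ρ n).re = 1/2 := by rw [hρ n]; simp
    calc (1:ℝ)/2 = |(ρ n).re| := by rw [h1, abs_of_nonneg]; norm_num
    _ ≤ ‖ρ n‖ := Complex.abs_re_le_norm _
  have hρpos : ∀ n, 0 < ‖ρ n‖ := fun n => lt_of_lt_of_le (by norm_num) (hρabs n)
  have hγpos : ∀ n, 0 < |γ n| := fun n => abs_pos.mpr (hγ n)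
  have habsexp : ∀ x y : ℝ, ‖Complex.exp (Complex.I * x * y)‖ = 1 := by
    intro x y
    rw [Complex.norm_exp]
    have : (Complex.I * x * y).re = 0 := by simp [Complex.mul_re]
    rw [this, Real.exp_zero]
  refine ⟨(2*K + 33*C)/Real.log 2 + C, ?_⟩
  intro Y hY
  have hYpos : (0:ℝ) < Y := by linarith
  have hl2Y : Real.log 2 ≤ Y := by linarith
  set T := Real.exp Y with hTdef
  have hT2 : (2:ℝ) ≤ T := by
    have := Real.add_one_le_exp Y
    simp only [hTdef]; linarith
  set s : Set ℝ := Set.Ioc (Real.log 2) Y with hs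
  set f : ℕ → ℝ → ℂ := fun n u =>
    if |γ n| ≤ T then a n * Complex.exp (Complex.I * u * γ n) / ρ n else 0 with hf
  set S : ℝ → ℂ := fun u => ∑' n, f n u with hSdef
  set bnd : ℕ → ℝ := fun n =>
    if |γ n| ≤ T then ‖a n‖ / ‖ρ n‖ else 0 with hbnd
  have hfnorm : ∀ n u, ‖f n u‖ ≤ bnd n := by
    intro n u
    simp only [hf, hbnd]
    split_ifs with h
    · rw [norm_div, norm_mul, habsexp, mul_one]
    · simp
  have hbnd_nonneg : ∀ n, 0 ≤ bnd n := by
    intro n; simp only [hbnd]; split_ifs with h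
    · positivity
    · exact le_refl 0
  have hbnd_le : ∀ n, bnd n ≤ T * (‖a n‖ / (‖ρ n‖ * |γ n|)) := by
    intro n; simp only [hbnd]; split_ifs with h
    · have hRne := (hρpos n).ne'
      have hGne := (hγpos n).ne'
      rw [show ‖a n‖ / ‖ρ n‖
          = |γ n| * (‖a n‖ / (‖ρ n‖ * |γ n|)) from by
        field_simp]
      exact mul_le_mul_of_nonneg_right h (by positivity)
    · positivity
  have hbnd_sum : Summable bnd :=
    Summable.of_nonneg_of_le hbnd_nonneg hbnd_le (hsum.mul_left T)
  have hfc : ∀ n, Continuous (f n) := by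
    intro n
    by_cases h : |γ n| ≤ T
    · simp only [hf, if_pos h]; fun_prop
    · simp only [hf, if_neg h]; exact continuous_const
  have hScont : Continuous S := continuous_tsum hfc hbnd_sum fun n u => hfnorm n u
  have hSint : IntegrableOn S s := hScont.integrableOn_Ioc
  have hΔint : IntegrableOn Δ s :=
    (hΔ.integrableOn_isCompact (isCompact_Icc (a := Real.log 2) (b := Y))).mono_set
      Set.Ioc_subset_Icc_self
  have hsplit : ∫ u in (Real.log 2)..Y, Δ u = (∫ u in s, S u) + ∫ u in s, (Δ u - S u) := by
    rw [intervalIntegral.integral_of_le hl2Y]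
    have heq : ∫ u in s, Δ u = ∫ u in s, (S u + (Δ u - S u)) :=
      integral_congr_ae (Filter.Eventually.of_forall fun u => by ring)
    rw [heq]
    exact integral_add hSint (hΔint.sub hSint)
  -- main-term bound
  have hfint : ∀ n, IntegrableOn (f n) s := fun n => (hfc n).integrableOn_Ioc
  have hvol : (volume s).toReal = Y - Real.log 2 := by
    simp [hs, Real.volume_Ioc, ENNReal.toReal_ofReal (by linarith : (0:ℝ) ≤ Y - Real.log 2)]
  have hnormint : ∀ n, (∫ u in s, ‖f n u‖) ≤ bnd n * (Y - Real.log 2) := by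
    intro n
    calc (∫ u in s, ‖f n u‖) ≤ ∫ _u in s, bnd n :=
          integral_mono (hfint n).norm (integrable_const _) fun u => hfnorm n u
    _ = bnd n * (Y - Real.log 2) := by
          rw [setIntegral_const, measureReal_def, hvol, smul_eq_mul, mul_comm]
  have hsum_int : Summable fun n => ∫ u in s, ‖f n u‖ :=
    Summable.of_nonneg_of_le (fun n => integral_nonneg fun u => norm_nonneg _)
      hnormint (hbnd_sum.mul_right _)
  have hswap : ∑' n, (∫ u in s, f n u) = ∫ u in s, S u :=
    integral_tsum_of_summable_integral_norm hfint hsum_int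
  have hival : ∀ n, ‖∫ u in s, f n u‖ ≤ 2 * (‖a n‖ / (‖ρ n‖ * |γ n|)) := by
    intro n
    by_cases h : |γ n| ≤ T
    · have hc : (Complex.I * (γ n : ℂ)) ≠ 0 :=
        mul_ne_zero Complex.I_ne_zero (by exact_mod_cast hγ n)
      have h1 : (∫ u in s, f n u)
          = (a n / ρ n) * ((Complex.exp (Complex.I * (γ n:ℂ) * Y)
              - Complex.exp (Complex.I * (γ n:ℂ) * Real.log 2)) / (Complex.I * γ n)) := by
        rw [hs, ← intervalIntegral.integral_of_le hl2Y]
        have heq : ∀ u : ℝ, f n u = (a n / ρ n) * Complex.exp ((Complex.I * (γ n:ℂ)) * u) := by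
          intro u
          simp only [hf, if_pos h]
          rw [show Complex.I * (u:ℂ) * (γ n:ℂ) = (Complex.I * (γ n:ℂ)) * u from by ring]
          ring
        simp only [heq]
        rw [intervalIntegral.integral_const_mul, integral_exp_mul_complex hc]
      rw [h1]
      rw [norm_mul, norm_div, norm_div, norm_mul, Complex.norm_I, one_mul,
        Complex.norm_real, Real.norm_eq_abs]
      have he1 : ‖Complex.exp (Complex.I * (γ n:ℂ) * Y)‖ = 1 := habsexp _ _
      have he2 : ‖Complex.exp (Complex.I * (γ n:ℂ) * Real.log 2)‖ = 1 := habsexp _ _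
      have hd : ‖Complex.exp (Complex.I * (γ n:ℂ) * Y)
          - Complex.exp (Complex.I * (γ n:ℂ) * Real.log 2)‖ ≤ 2 := by
        calc _ ≤ ‖Complex.exp (Complex.I * (γ n:ℂ) * Y)‖
              + ‖Complex.exp (Complex.I * (γ n:ℂ) * Real.log 2)‖ :=
              norm_sub_le _ _
        _ = 2 := by rw [he1, he2]; norm_num
      have hA : (0:ℝ) ≤ ‖a n‖ := norm_nonneg _
      have hR := hρpos n
      have hG := hγpos n
      rw [div_mul_div_comm, show 2 * (‖a n‖ / (‖ρ n‖ * |γ n|))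
          = (‖a n‖ * 2) / (‖ρ n‖ * |γ n|) from by ring]
      gcongr
    · have hz : (∫ u in s, f n u) = 0 := by
        have : ∀ u : ℝ, f n u = 0 := fun u => by simp only [hf, if_neg h]
        simp only [this]
        exact integral_zero _ _
      rw [hz, norm_zero]
      positivity
  have hsum2 : Summable fun n => ‖∫ u in s, f n u‖ :=
    Summable.of_nonneg_of_le (fun n => norm_nonneg _) hival (hsum.mul_left 2)
  have hSbound : ‖∫ u in s, S u‖ ≤ 2 * K := by
    rw [← hswap]
    calc ‖∑' n, ∫ u in s, f n u‖ ≤ ∑' n, ‖∫ u in s, f n u‖ := norm_tsum_le_tsum_norm hsum2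
    _ ≤ ∑' n, 2 * (‖a n‖ / (‖ρ n‖ * |γ n|)) :=
        Summable.tsum_le_tsum hival hsum2 (hsum.mul_left 2)
    _ = 2 * K := tsum_mul_left
  -- remainder bound
  have h0uIcc : ∀ u ∈ Set.uIcc (Real.log 2) Y, u ≠ 0 := by
    intro u hu
    rw [Set.uIcc_of_le hl2Y] at hu
    exact (lt_of_lt_of_le hlog2pos hu.1).ne'
  have hinv_int : IntervalIntegrable (fun u : ℝ => 1/u) volume (Real.log 2) Y :=
    (continuousOn_const.div continuousOn_id h0uIcc).intervalIntegrable
  have hexp_int2 : IntervalIntegrable (fun u : ℝ => Y^2 * Real.exp (u/2) / Real.exp Y)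
      volume (Real.log 2) Y := (Continuous.intervalIntegrable (by fun_prop) _ _)
  have hg_int : IntervalIntegrable
      (fun u : ℝ => C * (Y^2 * Real.exp (u/2) / Real.exp Y + 1/u)) volume (Real.log 2) Y :=
    ((hexp_int2.add hinv_int).const_mul C)
  have hexpint : ∫ u in (Real.log 2)..Y, Real.exp (u/2)
      = 2*Real.exp (Y/2) - 2*Real.exp (Real.log 2/2) := by
    have hd : ∀ u : ℝ, HasDerivAt (fun v : ℝ => 2 * Real.exp (v/2)) (Real.exp (u/2)) u := by
      intro u
      have h1 : HasDerivAt (fun v : ℝ => v/2) (1/2) u := (hasDerivAt_id u).div_const 2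
      have h2 := (Real.hasDerivAt_exp (u/2)).comp u h1
      have h3 := h2.const_mul (2:ℝ)
      exact h3.congr_deriv (by ring)
    rw [intervalIntegral.integral_eq_sub_of_hasDerivAt (fun u _ => hd u)
      (Continuous.intervalIntegrable (by fun_prop) _ _)]
  have hRbound : ‖∫ u in s, (Δ u - S u)‖ ≤ C * (32 + (Real.log Y + 1)) := by
    rw [hs, ← intervalIntegral.integral_of_le hl2Y]
    have key : ‖∫ u in (Real.log 2)..Y, (Δ u - S u)‖
        ≤ |∫ u in (Real.log 2)..Y, C * (Y^2 * Real.exp (u/2) / Real.exp Y + 1/u)| := by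
      apply intervalIntegral.norm_integral_le_abs_of_norm_le ?_ hg_int
      rw [Set.uIoc_of_le hl2Y]
      filter_upwards [ae_restrict_mem measurableSet_Ioc] with u hu
      have := hdecomp T hT2 u hu.1.le
      rw [Real.log_exp] at this
      exact this
    refine key.trans ?_
    -- compute and estimate the right-hand side
    have hcalc : ∫ u in (Real.log 2)..Y, C * (Y^2 * Real.exp (u/2) / Real.exp Y + 1/u)
        = C * ((Y^2/Real.exp Y) * (2*Real.exp (Y/2) - 2*Real.exp (Real.log 2/2))
            + Real.log (Y/Real.log 2)) := by
      rw [intervalIntegral.integral_const_mul, intervalIntegral.integral_add hexp_int2 hinv_int]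
      rw [show (fun u : ℝ => Y^2 * Real.exp (u/2) / Real.exp Y)
          = fun u : ℝ => (Y^2/Real.exp Y) * Real.exp (u/2) from funext fun u => by ring]
      rw [intervalIntegral.integral_const_mul, hexpint, integral_one_div ?_]
      intro hmem
      exact h0uIcc 0 hmem rfl
    have hnn1 : 0 ≤ 2*Real.exp (Y/2) - 2*Real.exp (Real.log 2/2) := by
      have := Real.exp_le_exp.mpr (by linarith : Real.log 2/2 ≤ Y/2); linarith
    have hnn2 : 0 ≤ Real.log (Y/Real.log 2) :=
      Real.log_nonneg (by rw [le_div_iff₀ hlog2pos]; linarith)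
    rw [hcalc, abs_of_nonneg (mul_nonneg hC.le
      (add_nonneg (mul_nonneg (by positivity) hnn1) hnn2))]
    apply mul_le_mul_of_nonneg_left ?_ hC.le
    have h16 : Y^2 ≤ 16 * Real.exp (Y/2) := by
      have hE : Real.exp (Y/4) * Real.exp (Y/4) = Real.exp (Y/2) := by
        rw [← Real.exp_add]; ring_nf
      have h1 : Y/4 + 1 ≤ Real.exp (Y/4) := Real.add_one_le_exp _
      have h2 : (Y/4+1)*(Y/4+1) ≤ Real.exp (Y/4) * Real.exp (Y/4) :=
        mul_le_mul h1 h1 (by linarith) (by positivity)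
      nlinarith [h2, hE]
    have hEY : Real.exp Y = Real.exp (Y/2) * Real.exp (Y/2) := by
      rw [← Real.exp_add]; ring_nf
    have hbound1 : Y^2/Real.exp Y * (2*Real.exp (Y/2) - 2*Real.exp (Real.log 2/2)) ≤ 32 := by
      rw [hEY, div_mul_eq_mul_div, div_le_iff₀ (by positivity)]
      nlinarith [Real.exp_pos (Y/2), Real.exp_pos (Real.log 2/2), h16, sq_nonneg Y,
        mul_nonneg (sq_nonneg Y) (Real.exp_pos (Real.log 2/2)).le]
    have hlogb : Real.log (Y/Real.log 2) ≤ Real.log Y + 1 := by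
      rw [Real.log_div (by linarith) hlog2pos.ne']
      have h1 : Real.exp (-1) ≤ Real.log 2 := by
        rw [Real.exp_neg]
        have he : (2.7182818283:ℝ) < Real.exp 1 := Real.exp_one_gt_d9
        have h2 : (Real.exp 1)⁻¹ ≤ (2.7182818283:ℝ)⁻¹ := by
          apply inv_anti₀ (by norm_num) he.le
        have hl2 : (0.6931471803:ℝ) < Real.log 2 := Real.log_two_gt_d9
        have h3 : (2.7182818283:ℝ)⁻¹ < 0.6931471803 := by norm_num
        linarith
      have h4 : (-1:ℝ) ≤ Real.log (Real.log 2) := by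
        calc (-1:ℝ) = Real.log (Real.exp (-1)) := (Real.log_exp _).symm
        _ ≤ Real.log (Real.log 2) := Real.log_le_log (Real.exp_pos _) h1
      linarith
    linarith
  -- conclude
  have hlogY : Real.log 2 ≤ Real.log Y := Real.log_le_log (by norm_num) hY
  have hM : (0:ℝ) ≤ 2*K + 33*C := by linarith
  have hdiv : 2*K + 33*C = (2*K+33*C)/Real.log 2 * Real.log 2 :=
    (div_mul_cancel₀ _ hlog2pos.ne').symm
  have h2 : (2*K+33*C)/Real.log 2 * Real.log 2 ≤ (2*K+33*C)/Real.log 2 * Real.log Y :=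
    mul_le_mul_of_nonneg_left hlogY (by positivity)
  calc ‖∫ u in (Real.log 2)..Y, Δ u‖
      ≤ ‖∫ u in s, S u‖ + ‖∫ u in s, (Δ u - S u)‖ := by
        rw [hsplit]; exact norm_add_le _ _
  _ ≤ 2*K + C*(32 + (Real.log Y + 1)) := add_le_add hSbound hRbound
  _ ≤ ((2*K + 33*C)/Real.log 2 + C) * Real.log Y := by nlinarith [h2, hdiv]
end
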